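/- Let p be an odd prime and G a finite p-group that is not powerful. Then there exists a normal subgroup N of G such that either G/N is an extra-special group of exponent p, or G/N = U × V where U ≤ Z(G/N) is elementary abelian and V is extra-special of exponent p. -/

import Mathlib

/-!
Take `N` maximal among the normal subgroups containing `G^p` but not `γ₂(G)`. Then `Q = G/N` has
exponent `p` and every nontrivial normal subgroup of `Q` contains `γ₂(Q)`. As `Q` is nilpotent,
`γ₃(Q) = 1` (otherwise `γ₂(Q) ≤ γ₃(Q)` and the lower central series would never reach `1`), so
every nontrivial central cyclic subgroup, having order `p`, equals `γ₂(Q)`; hence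
`Z(Q) = γ₂(Q)` has order `p`. A central `γ₂(Q)` lies in every maximal subgroup, and since
`Q/γ₂(Q)` is elementary abelian every element outside `γ₂(Q)` avoids some maximal subgroup, so
`Φ(Q) = γ₂(Q)`. Thus `G/N` is always extra-special of exponent `p`.
-/

/-- A finite `p`-group is extra-special if its center, commutator subgroup and
Frattini subgroup coincide and have order `p`. -/
def IsExtraspecial (p : ℕ) (G : Type*) [Group G] : Prop :=
  Subgroup.center G = commutator G ∧ commutator G = frattini G ∧
    Nat.card (Subgroup.center G) = p

/-- The desired property of the quotient `G/N`: either it is extra-special of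
exponent `p`, or it is the internal direct product of an elementary abelian
central subgroup `U` and an extra-special subgroup `V` of exponent `p`. -/
def QuotientCondition (p : ℕ) {G : Type*} [Group G] (N : Subgroup G) [N.Normal] : Prop :=
  (IsExtraspecial p (G ⧸ N) ∧ Monoid.exponent (G ⧸ N) = p) ∨
    ∃ U V : Subgroup (G ⧸ N),
      U ≤ Subgroup.center (G ⧸ N) ∧ (∀ u ∈ U, u ^ p = 1) ∧
      IsExtraspecial p V ∧ Monoid.exponent V = p ∧
      U ⊓ V = ⊥ ∧ U ⊔ V = ⊤

open scoped commutatorElement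

section

variable {G : Type*} [Group G]

instance Subgroup.closure_pow_characteristic (n : ℕ) :
    (Subgroup.closure {x : G | ∃ g : G, g ^ n = x}).Characteristic := by
  refine Subgroup.characteristic_iff_map_le.mpr fun ϕ => ?_
  rw [MonoidHom.map_closure]
  refine Subgroup.closure_mono ?_
  rintro _ ⟨_, ⟨g, rfl⟩, rfl⟩
  exact ⟨ϕ g, (map_pow ϕ g n).symm⟩

theorem Subgroup.normal_of_le_center {H : Subgroup G} (h : H ≤ Subgroup.center G) : H.Normal :=
  ⟨fun n hn g => by rwa [Subgroup.mem_center_iff.mp (h hn) g, mul_inv_cancel_right]⟩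

theorem Subgroup.normal_of_commutator_le {H : Subgroup G} (h : _root_.commutator G ≤ H) :
    H.Normal :=
  ⟨fun n hn g => by
    rw [show g * n * g⁻¹ = ⁅g, n⁆ * n by group]
    exact H.mul_mem (h (Subgroup.commutator_mem_commutator (Subgroup.mem_top g)
      (Subgroup.mem_top n))) hn⟩

theorem commutatorElement_mul_mul_of_mem_center {a b c d : G} (hc : c ∈ Subgroup.center G)
    (hd : d ∈ Subgroup.center G) : ⁅a * c, b * d⁆ = ⁅a, b⁆ := by
  rw [Subgroup.mem_center_iff] at hc hd
  calc ⁅a * c, b * d⁆ = a * (c * (b * d)) * c⁻¹ * a⁻¹ * d⁻¹ * b⁻¹ := by group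
    _ = a * b * (d * a⁻¹) * d⁻¹ * b⁻¹ := by rw [← hc (b * d)]; group
    _ = ⁅a, b⁆ := by rw [← hd a⁻¹]; group

theorem Subgroup.lowerCentralSeries_eq_bot_of_le_succ [Group.IsNilpotent G] {n : ℕ}
    (h : (⊤ : Subgroup G).lowerCentralSeries n ≤
      (⊤ : Subgroup G).lowerCentralSeries (n + 1)) :
    (⊤ : Subgroup G).lowerCentralSeries n = ⊥ := by
  have hmono : Monotone fun k => (⊤ : Subgroup G).lowerCentralSeries (n + k) :=
    monotone_nat_of_le_succ fun k => by
      induction k with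
      | zero => exact h
      | succ k ih => exact Subgroup.commutator_mono ih le_rfl
  obtain ⟨m, hm⟩ := Subgroup.nilpotent_iff_lowerCentralSeries.mp ‹_›
  rw [eq_bot_iff, ← hm]
  exact (hmono (Nat.zero_le m)).trans
    (Subgroup.lowerCentralSeries_antitone ⊤ (Nat.le_add_left m n))

theorem commutator_le_frattini_of_le_center (h : commutator G ≤ Subgroup.center G) :
    commutator G ≤ frattini G := by
  refine le_iInf₂ fun K hK => ?_
  by_contra hCK
  have hsup : K ⊔ commutator G = ⊤ := hK.2 _ (left_lt_sup.mpr hCK)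
  apply hCK
  have hdecomp : ∀ g : G, ∃ k ∈ K, ∃ c ∈ commutator G, k * c = g := fun g => by
    have hg : g ∈ ((K ⊔ commutator G : Subgroup G) : Set G) := by simp [hsup]
    rwa [Subgroup.mul_normal] at hg
  rw [_root_.commutator_def, Subgroup.commutator_le]
  rintro g - h -
  obtain ⟨k₁, hk₁, c₁, hc₁, rfl⟩ := hdecomp g
  obtain ⟨k₂, hk₂, c₂, hc₂, rfl⟩ := hdecomp h
  rw [commutatorElement_mul_mul_of_mem_center (h hc₁) (h hc₂), commutatorElement_def]
  exact K.mul_mem (K.mul_mem (K.mul_mem hk₁ hk₂) (K.inv_mem hk₁)) (K.inv_mem hk₂)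

end

section ExponentPrime

variable {Q : Type*} [Group Q] {p : ℕ} [Fact p.Prime]

theorem mem_sup_zpowers_of_mem_sup_zpowers {M : Subgroup Q} [M.Normal] {y z : Q}
    (hz : z ^ p = 1) (hy : y ∉ M) (hyz : y ∈ M ⊔ Subgroup.zpowers z) :
    z ∈ M ⊔ Subgroup.zpowers y := by
  rw [← SetLike.mem_coe, Subgroup.normal_mul] at hyz
  obtain ⟨m, hm, _, ⟨k, rfl⟩, rfl⟩ := hyz
  have hzk : z ^ k ∉ M := fun h => hy (M.mul_mem hm h)
  have hz1 : z ≠ 1 := by rintro rfl; simp at hzk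
  have hgen : z ∈ Subgroup.zpowers (z ^ k) := by
    rw [mem_zpowers_zpow_iff, orderOf_eq_prime hz hz1, Int.gcd_comm,
      ← Int.isCoprime_iff_gcd_eq_one]
    refine (Nat.prime_iff_prime_int.mp Fact.out).coprime_iff_not_dvd.mpr fun ⟨j, hj⟩ => hzk ?_
    rw [hj, zpow_mul, zpow_natCast, hz, one_zpow]
    exact M.one_mem
  refine Subgroup.zpowers_le.mpr ?_ hgen
  rw [show z ^ k = m⁻¹ * (m * z ^ k) by group]
  exact (M ⊔ Subgroup.zpowers _).mul_mem (Subgroup.mem_sup_left (M.inv_mem hm))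
    (Subgroup.mem_sup_right (Subgroup.mem_zpowers _))

theorem frattini_le_commutator_of_pow_eq_one [Finite Q] (hexp : ∀ x : Q, x ^ p = 1) :
    frattini Q ≤ commutator Q := by
  intro y hy
  by_contra hyC
  obtain ⟨M, ⟨hCM, hyM⟩, hMmax⟩ := Set.Finite.exists_maximalFor id
    {H : Subgroup Q | commutator Q ≤ H ∧ y ∉ H} (Set.toFinite _)
    ⟨commutator Q, le_rfl, hyC⟩
  have := Subgroup.normal_of_commutator_le hCM
  have hextend : ∀ z ∉ M, y ∈ M ⊔ Subgroup.zpowers z := fun z hz => by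
    by_contra hy'
    exact hz (hMmax ⟨hCM.trans le_sup_left, hy'⟩ le_sup_left
      (Subgroup.mem_sup_right (Subgroup.mem_zpowers z)))
  have hcoatom : IsCoatom M := by
    refine ⟨fun h => hyM (h ▸ Subgroup.mem_top y), fun K hK => eq_top_iff.mpr fun z _ => ?_⟩
    obtain ⟨w, hwK, hwM⟩ := SetLike.exists_of_lt hK
    have hsup : ∀ x ∈ K, M ⊔ Subgroup.zpowers x ≤ K := fun x hx =>
      sup_le hK.le (Subgroup.zpowers_le.mpr hx)
    by_cases hzM : z ∈ M
    · exact hK.le hzM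
    · exact hsup y (hsup w hwK (hextend w hwM))
        (mem_sup_zpowers_of_mem_sup_zpowers (hexp z) hyM (hextend z hzM))
  exact hyM (frattini_le_coatom hcoatom hy)

end ExponentPrime

theorem commutator_le_center_of_forall_normal {Q : Type*} [Group Q] [Group.IsNilpotent Q]
    (hne : commutator Q ≠ ⊥)
    (hmin : ∀ M : Subgroup Q, M.Normal → M ≠ ⊥ → commutator Q ≤ M) :
    commutator Q ≤ Subgroup.center Q := by
  rw [← Subgroup.commutator_top_right_eq_bot_iff_le_center]
  by_contra h
  exact hne (Subgroup.lowerCentralSeries_eq_bot_of_le_succ (n := 1) (hmin _ inferInstance h))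

theorem map_commutator_of_surjective {G H : Type*} [Group G] [Group H] {f : G →* H}
    (hf : Function.Surjective f) : (commutator G).map f = commutator H := by
  rw [_root_.commutator_def, _root_.commutator_def, Subgroup.map_commutator,
    Subgroup.map_top_of_surjective f hf]

theorem commutator_quotient_le_of_forall_normal {G : Type*} [Group G] {N : Subgroup G} [N.Normal]
    (hN : ∀ M : Subgroup G, M.Normal → N ≤ M → ¬ commutator G ≤ M → M ≤ N)
    (M : Subgroup (G ⧸ N)) (hMn : M.Normal) (hM : M ≠ ⊥) : commutator (G ⧸ N) ≤ M := by
  by_contra hCM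
  have hNM : N ≤ M.comap (QuotientGroup.mk' N) := fun n hn => by
    simp [(QuotientGroup.eq_one_iff n).mpr hn]
  have hMN : M.comap (QuotientGroup.mk' N) ≤ N := hN _ (hMn.comap _) hNM fun h => hCM <| by
    rw [← map_commutator_of_surjective (QuotientGroup.mk'_surjective N)]
    exact Subgroup.map_le_iff_le_comap.mpr h
  apply hM
  rw [← Subgroup.map_comap_eq_self_of_surjective (QuotientGroup.mk'_surjective N) M,
    Subgroup.map_eq_bot_iff, QuotientGroup.ker_mk']
  exact hMN

theorem isExtraspecial_of_forall_normal {Q : Type*} [Group Q] [Finite Q] [Group.IsNilpotent Q]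
    {p : ℕ} [Fact p.Prime] (hexp : ∀ x : Q, x ^ p = 1) (hne : commutator Q ≠ ⊥)
    (hmin : ∀ M : Subgroup Q, M.Normal → M ≠ ⊥ → commutator Q ≤ M) :
    IsExtraspecial p Q ∧ Monoid.exponent Q = p := by
  have hcen := commutator_le_center_of_forall_normal hne hmin
  have hcard : ∀ z : Q, z ≠ 1 → Nat.card (Subgroup.zpowers z) = p := fun z hz =>
    by rw [Nat.card_zpowers, orderOf_eq_prime (hexp z) hz]
  have hcyc : ∀ z ∈ Subgroup.center Q, z ≠ 1 → commutator Q ≤ Subgroup.zpowers z :=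
    fun z hz hz1 => hmin _ (Subgroup.normal_of_le_center (Subgroup.zpowers_le.mpr hz))
      (Subgroup.zpowers_ne_bot.mpr hz1)
  obtain ⟨x, hxC, hx1⟩ := (Subgroup.bot_or_exists_ne_one _).resolve_left hne
  have hCx : commutator Q = Subgroup.zpowers x :=
    le_antisymm (hcyc x (hcen hxC) hx1) (Subgroup.zpowers_le.mpr hxC)
  have hZC : Subgroup.center Q = commutator Q := by
    refine le_antisymm (fun z hz => ?_) hcen
    by_cases hz1 : z = 1
    · exact hz1 ▸ (commutator Q).one_mem
    · rw [Subgroup.eq_of_le_of_card_ge (hcyc z hz hz1) (by rw [hCx, hcard _ hx1, hcard z hz1])]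
      exact Subgroup.mem_zpowers z
  have : Nontrivial Q := ⟨⟨x, 1, hx1⟩⟩
  refine ⟨⟨hZC, le_antisymm (commutator_le_frattini_of_le_center hcen)
    (frattini_le_commutator_of_pow_eq_one hexp), by rw [hZC, hCx, hcard _ hx1]⟩, ?_⟩
  exact (Monoid.exponent_eq_prime_iff Fact.out).mpr fun g hg => orderOf_eq_prime (hexp g) hg

theorem stmt2_general {p : ℕ} [Fact p.Prime] {G : Type*} [Group G] [Finite G]
    (hG : IsPGroup p G)
    (hnp : ¬ commutator G ≤ Subgroup.closure {x : G | ∃ g : G, g ^ p = x}) :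
    ∃ (N : Subgroup G) (h : N.Normal), @QuotientCondition p G _ N h := by
  set P := Subgroup.closure {x : G | ∃ g : G, g ^ p = x}
  obtain ⟨N, ⟨hN, hPN, hCN⟩, hNmax⟩ := Set.Finite.exists_maximalFor id
    {N : Subgroup G | N.Normal ∧ P ≤ N ∧ ¬ commutator G ≤ N} (Set.toFinite _)
    ⟨P, inferInstance, le_rfl, hnp⟩
  have hexp : ∀ x : G ⧸ N, x ^ p = 1 := fun x => by
    obtain ⟨g, rfl⟩ := QuotientGroup.mk_surjective x
    rw [← QuotientGroup.mk_pow, QuotientGroup.eq_one_iff]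
    exact hPN (Subgroup.subset_closure ⟨g, rfl⟩)
  have hne : commutator (G ⧸ N) ≠ ⊥ := by
    rwa [← map_commutator_of_surjective (QuotientGroup.mk'_surjective N), Ne,
      Subgroup.map_eq_bot_iff, QuotientGroup.ker_mk']
  have := (hG.to_quotient N).isNilpotent
  exact ⟨N, hN, Or.inl (isExtraspecial_of_forall_normal hexp hne
    (commutator_quotient_le_of_forall_normal
      (fun M hM hNM hCM => hNmax ⟨hM, hPN.trans hNM, hCM⟩ hNM)))⟩

/-- Let `p` be an odd prime and `G` a finite `p`-group that is not
powerful (i.e. `γ₂(G) ≰ G^p`).  Then there is a normal subgroup `N` of `G` such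
that either `G/N` is extra-special of exponent `p`, or `G/N = U × V` where
`U ≤ Z(G/N)` is elementary abelian and `V` is extra-special of exponent `p`. -/
theorem stmt2 {p : ℕ} [Fact p.Prime] (hodd : Odd p) {G : Type*} [Group G] [Finite G]
    (hG : IsPGroup p G)
    (hnp : ¬ commutator G ≤ Subgroup.closure {x : G | ∃ g : G, g ^ p = x}) :
    ∃ (N : Subgroup G) (h : N.Normal), @QuotientCondition p G _ N h :=
  stmt2_general hG hnp
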